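/- Let X be a finite nonempty set and ε > 0. If θ and θ' are partial dendrograms over X such that neither θ(∞) nor θ'(∞) is the one-block partition {X} (as is the case for all partial dendrograms arising over a strict poset with nonempty order relation), then U_ε(θ) = U_ε(θ') implies θ = θ'. In other words, the ultrametric completion U_ε is injective on such partial dendrograms for every ε > 0. -/

import Mathlib

/-!
The values of `U_ε(θ)` on pairs joined in `θ(∞)` are merge heights, at most `diam θ`, while every
pair separated by `θ(∞)` (and there is one, as `θ(∞) ≠ ⊤`) gets `diam θ + ε`. So `diam θ + ε` is
the maximum of `U_ε(θ)`, and for `ε > 0` the pairs joined in `θ(∞)` are exactly those with a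
smaller value. Hence `U_ε(θ)` determines `θ(∞)` and the merge heights, and because (D1) makes each
merge height attained, `x` and `y` are related in `θ(t)` iff they are joined in `θ(∞)` and merge
at height at most `t`.
-/

open scoped NNReal
open Classical

/-- The diameter of a partial dendrogram `θ`: the least `t` at which `θ`
attains its greatest partition `θ(∞) = ⨆ t', θ t'`. -/
noncomputable def diamPD {X : Type*} (θ : ℝ≥0 → Setoid X) : ℝ≥0 :=
  sInf {t : ℝ≥0 | θ t = ⨆ t', θ t'}

/-- The ultrametric completion `U_ε(θ)`: the merge height of `x` and `y` if they
end up in one block of `θ(∞)`, and `diam θ + ε` otherwise. -/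
noncomputable def Ueps {X : Type*} (θ : ℝ≥0 → Setoid X) (ε : ℝ≥0) (x y : X) : ℝ≥0 :=
  if (⨆ t, θ t) x y then sInf {t : ℝ≥0 | (θ t) x y} else diamPD θ + ε

theorem Monotone.exists_iSup_eq {ι α : Type*} [LinearOrder ι] [Nonempty ι] [CompleteLattice α]
    {f : ι → α} (hf : Monotone f) (hfin : (Set.range f).Finite) : ∃ i, ⨆ j, f j = f i := by
  obtain ⟨_, ⟨i, rfl⟩, hmax⟩ := hfin.exists_maximalFor id _ (Set.range_nonempty f)
  refine ⟨i, le_antisymm (iSup_le fun j => ?_) (le_iSup f i)⟩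
  rcases le_total j i with h | h
  · exact hf h
  · exact hmax (Set.mem_range_self j) (hf h)

instance Setoid.finite {X : Type*} [Finite X] : Finite (Setoid X) :=
  Finite.of_injective (fun s : Setoid X => ⇑s) fun _ _ h =>
    Setoid.ext fun x y => iff_of_eq (congrFun₂ h x y)

-- Since `sInf ∅ = 0`, this is junk unless `x` and `y` eventually merge.
noncomputable def mergeHeight {X : Type*} (θ : ℝ≥0 → Setoid X) (x y : X) : ℝ≥0 :=
  sInf {t : ℝ≥0 | θ t x y}

section

variable {X : Type*} {θ : ℝ≥0 → Setoid X}

-- Right continuity (D1) turns the infimum defining the merge height into a minimum.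
theorem apply_mergeHeight (hmono : Monotone θ)
    (hD1 : ∀ t : ℝ≥0, ∃ δ : ℝ≥0, 0 < δ ∧ θ t = θ (t + δ)) {x y : X} (h : ∃ t, θ t x y) :
    θ (mergeHeight θ x y) x y := by
  obtain ⟨δ, hδ, hθδ⟩ := hD1 (mergeHeight θ x y)
  obtain ⟨s, hs, hslt⟩ := exists_lt_of_csInf_lt h (lt_add_of_pos_right _ hδ)
  exact (hθδ ▸ hmono hslt.le) hs

theorem apply_iff_mergeHeight_le (hmono : Monotone θ)
    (hD1 : ∀ t : ℝ≥0, ∃ δ : ℝ≥0, 0 < δ ∧ θ t = θ (t + δ)) {t : ℝ≥0} {x y : X} :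
    θ t x y ↔ (∃ s, θ s x y) ∧ mergeHeight θ x y ≤ t :=
  ⟨fun h => ⟨⟨t, h⟩, csInf_le (OrderBot.bddBelow _) h⟩,
    fun ⟨h, hle⟩ => hmono hle (apply_mergeHeight hmono hD1 h)⟩

theorem Ueps_of_iSup_apply {ε : ℝ≥0} {x y : X} (h : (⨆ t, θ t) x y) :
    Ueps θ ε x y = mergeHeight θ x y :=
  if_pos h

theorem Ueps_of_not_iSup_apply {ε : ℝ≥0} {x y : X} (h : ¬ (⨆ t, θ t) x y) :
    Ueps θ ε x y = diamPD θ + ε :=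
  if_neg h

variable [Finite X]

theorem iSup_apply_iff_exists (hmono : Monotone θ) {x y : X} :
    (⨆ t, θ t) x y ↔ ∃ t, θ t x y := by
  obtain ⟨T, hT⟩ := hmono.exists_iSup_eq (Set.toFinite _)
  exact ⟨fun h => ⟨T, hT ▸ h⟩, fun ⟨t, h⟩ => le_iSup θ t h⟩

theorem mergeHeight_le_diamPD (hmono : Monotone θ) {x y : X} (h : (⨆ t, θ t) x y) :
    mergeHeight θ x y ≤ diamPD θ := by
  obtain ⟨T, hT⟩ := hmono.exists_iSup_eq (Set.toFinite _)
  exact le_csInf ⟨T, hT.symm⟩ fun t (ht : θ t = _) =>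
    csInf_le (OrderBot.bddBelow _) (show θ t x y from ht ▸ h)

theorem Ueps_lt_diamPD_add_iff (hmono : Monotone θ) {ε : ℝ≥0} (hε : 0 < ε) {x y : X} :
    Ueps θ ε x y < diamPD θ + ε ↔ (⨆ t, θ t) x y := by
  by_cases h : (⨆ t, θ t) x y
  · rw [Ueps_of_iSup_apply h]
    exact iff_of_true ((mergeHeight_le_diamPD hmono h).trans_lt (lt_add_of_pos_right _ hε)) h
  · rw [Ueps_of_not_iSup_apply h]
    exact iff_of_false (lt_irrefl _) h

theorem isGreatest_Ueps (hmono : Monotone θ) (hne : (⨆ t, θ t) ≠ ⊤) (ε : ℝ≥0) :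
    IsGreatest (Set.range fun p : X × X => Ueps θ ε p.1 p.2) (diamPD θ + ε) := by
  obtain ⟨x, y, hxy⟩ : ∃ x y, ¬ (⨆ t, θ t) x y := by
    simpa [Setoid.eq_top_iff] using hne
  refine ⟨⟨(x, y), Ueps_of_not_iSup_apply hxy⟩, ?_⟩
  rintro _ ⟨⟨x', y'⟩, rfl⟩
  by_cases h : (⨆ t, θ t) x' y'
  · exact (Ueps_of_iSup_apply h).trans_le ((mergeHeight_le_diamPD hmono h).trans le_self_add)
  · exact (Ueps_of_not_iSup_apply h).le

end

theorem Ueps_injective_general {X : Type*} [Finite X]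
    (θ θ' : ℝ≥0 → Setoid X)
    (hmono : Monotone θ) (hmono' : Monotone θ')
    (hD1 : ∀ t : ℝ≥0, ∃ δ : ℝ≥0, 0 < δ ∧ θ t = θ (t + δ))
    (hD1' : ∀ t : ℝ≥0, ∃ δ : ℝ≥0, 0 < δ ∧ θ' t = θ' (t + δ))
    (hne : (⨆ t, θ t) ≠ (⊤ : Setoid X))
    (hne' : (⨆ t, θ' t) ≠ (⊤ : Setoid X))
    (ε : ℝ≥0) (hε : 0 < ε)
    (heq : ∀ x y : X, Ueps θ ε x y = Ueps θ' ε x y) :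
    θ = θ' := by
  have hdiam : diamPD θ + ε = diamPD θ' + ε :=
    (isGreatest_Ueps hmono hne ε).unique (by simpa only [heq] using isGreatest_Ueps hmono' hne' ε)
  have hrel : ∀ x y, (⨆ t, θ t) x y ↔ (⨆ t, θ' t) x y := fun x y => by
    rw [← Ueps_lt_diamPD_add_iff hmono hε, ← Ueps_lt_diamPD_add_iff hmono' hε, heq, hdiam]
  ext t x y
  rw [apply_iff_mergeHeight_le hmono hD1, apply_iff_mergeHeight_le hmono' hD1',
    ← iSup_apply_iff_exists hmono, ← iSup_apply_iff_exists hmono', hrel]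
  exact and_congr_right fun h => by
    rw [← Ueps_of_iSup_apply (ε := ε) ((hrel x y).mpr h), heq, Ueps_of_iSup_apply h]

/-- For `ε > 0` the ultrametric completion `U_ε` is injective on
partial dendrograms whose maximal partition is not the one-block partition (as is
the case for partial dendrograms over a strict poset with nonempty order relation). -/
theorem Ueps_injective {X : Type*} [Finite X] [Nonempty X]
    (θ θ' : ℝ≥0 → Setoid X)
    (hmono : Monotone θ) (hmono' : Monotone θ')
    (hD1 : ∀ t : ℝ≥0, ∃ δ : ℝ≥0, 0 < δ ∧ θ t = θ (t + δ))
    (hD1' : ∀ t : ℝ≥0, ∃ δ : ℝ≥0, 0 < δ ∧ θ' t = θ' (t + δ))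
    (hD3 : θ 0 = ⊥) (hD3' : θ' 0 = ⊥)
    (hne : (⨆ t, θ t) ≠ (⊤ : Setoid X))
    (hne' : (⨆ t, θ' t) ≠ (⊤ : Setoid X))
    (ε : ℝ≥0) (hε : 0 < ε)
    (heq : ∀ x y : X, Ueps θ ε x y = Ueps θ' ε x y) :
    θ = θ' :=
  Ueps_injective_general θ θ' hmono hmono' hD1 hD1' hne hne' ε hε heq
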